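/- Let f be a non-constant meromorphic function on the unit disk 𝔻, let n ∈ ℕ with n ≥ 2 and k ∈ ℕ with k ≥ 2, and suppose f' has a zero at a point z_0 ∈ 𝔻. Then S_{k,n}(f) has a pole of order exactly k − 1 at z_0; in particular, f''/f' = S_{2,n}(f) has a simple pole at z_0. -/

import Mathlib

open Complex Filter Set Metric Topology

noncomputable section

/-- The open unit disk `𝔻`. -/
def unitDisk : Set ℂ := Metric.ball (0 : ℂ) 1

/-- The logarithmic derivative of `f'`, i.e. `f''/f'`. -/
def ldd (f : ℂ → ℂ) : ℂ → ℂ := fun z => deriv (deriv f) z / deriv f z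

/-- `SRec n f m` is the generalized Schwarzian `S_{m+2,n}(f)`. -/
def SRec (n : ℕ) (f : ℂ → ℂ) : ℕ → ℂ → ℂ
  | 0 => ldd f
  | m + 1 => fun z => deriv (SRec n f m) z - (1 / (n : ℂ)) * ldd f z * SRec n f m z

/-- `SGen n k f` is `S_{k,n}(f)` (for `k ≥ 2`). -/
def SGen (n k : ℕ) (f : ℂ → ℂ) : ℂ → ℂ := SRec n f (k - 2)

/-- The generalized Schwarzian derivative of order `k`: `S_k(f) = S_{k+1,k}(f)`. -/
def Sk (k : ℕ) (f : ℂ → ℂ) : ℂ → ℂ := SGen k (k + 1) f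

/-- `f` is a non-constant meromorphic function on `U`: near no point of `U`
is `f` eventually equal to a constant. -/
def NonConstOn (f : ℂ → ℂ) (U : Set ℂ) : Prop :=
  ¬ ∃ c : ℂ, ∃ z ∈ U, ∀ᶠ w in 𝓝[≠] z, f w = c

/-- `E` has no accumulation point in `U`. -/
def NoAccIn (E U : Set ℂ) : Prop := ∀ z ∈ U, ¬ AccPt z (𝓟 E)

/-- The family `M_{k,M}`: (non-constant) meromorphic functions on `𝔻` whose generalized
Schwarzian derivative `S_k(f)` is holomorphic on `𝔻` with `‖S_k(f)‖_∞ ≤ M`, i.e. it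
coincides (away from a set without accumulation points in `𝔻`) with a function `g`
holomorphic on `𝔻` and bounded by `M`. -/
def MFam (k : ℕ) (M : ℝ) : Set (ℂ → ℂ) :=
  {f | MeromorphicOn f unitDisk ∧ NonConstOn f unitDisk ∧
    ∃ g : ℂ → ℂ, AnalyticOnNhd ℂ g unitDisk ∧ (∀ z ∈ unitDisk, ‖g z‖ ≤ M) ∧
      NoAccIn {w ∈ unitDisk | Sk k f w ≠ g w} unitDisk}

/-- The family `H_{k,M} = M_{k,M} ∩ H(𝔻)`. -/
def HFam (k : ℕ) (M : ℝ) : Set (ℂ → ℂ) :=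
  {f ∈ MFam k M | AnalyticOnNhd ℂ f unitDisk}

/-- The chordal (spherical) distance on the Riemann sphere `ℂ ∪ {∞}`. -/
def sphDist (x y : OnePoint ℂ) : ℝ :=
  Option.elim x (Option.elim y 0 fun w => 1 / Real.sqrt (1 + ‖w‖ ^ 2))
    fun z =>
      Option.elim y (1 / Real.sqrt (1 + ‖z‖ ^ 2)) fun w =>
        ‖z - w‖ / (Real.sqrt (1 + ‖z‖ ^ 2) * Real.sqrt (1 + ‖w‖ ^ 2))

/-- Locally uniform convergence on `U` with respect to the spherical metric. -/
def TendstoLocUnifSph (F : ℕ → ℂ → ℂ) (g : ℂ → OnePoint ℂ) (U : Set ℂ) : Prop :=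
  ∀ ε > (0 : ℝ), ∀ x ∈ U, ∃ t ∈ 𝓝[U] x,
    ∀ᶠ n in atTop, ∀ y ∈ t, sphDist (F n y : OnePoint ℂ) (g y) < ε

/-- A family of (meromorphic) functions is normal on `U` if every sequence has a
subsequence converging locally uniformly on `U` w.r.t. the spherical metric. -/
def NormalOn (𝓕 : Set (ℂ → ℂ)) (U : Set ℂ) : Prop :=
  ∀ F : ℕ → ℂ → ℂ, (∀ n, F n ∈ 𝓕) →
    ∃ φ : ℕ → ℕ, StrictMono φ ∧
      ∃ g : ℂ → OnePoint ℂ, TendstoLocUnifSph (fun n => F (φ n)) g U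

/-- A family is quasi-normal on `U` if every sequence has a subsequence converging
locally uniformly (spherically) off some exceptional set `E ⊆ U` without
accumulation points in `U`. -/
def QuasiNormalOn (𝓕 : Set (ℂ → ℂ)) (U : Set ℂ) : Prop :=
  ∀ F : ℕ → ℂ → ℂ, (∀ n, F n ∈ 𝓕) →
    ∃ φ : ℕ → ℕ, StrictMono φ ∧ ∃ E : Set ℂ, E ⊆ U ∧ NoAccIn E U ∧
      ∃ g : ℂ → OnePoint ℂ, TendstoLocUnifSph (fun n => F (φ n)) g (U \ E)

/-- A family is locally uniformly bounded on `U`. -/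
def LocUnifBddOn (𝓕 : Set (ℂ → ℂ)) (U : Set ℂ) : Prop :=
  ∀ x ∈ U, ∃ t ∈ 𝓝[U] x, ∃ C : ℝ, ∀ f ∈ 𝓕, ∀ y ∈ t, ‖f y‖ ≤ C

section AuxPole

private lemma analyticAt_deriv' {f : ℂ → ℂ} {x : ℂ} (h : AnalyticAt ℂ f x) :
    AnalyticAt ℂ (deriv f) x := by
  rcases _root_.mem_nhds_iff.mp h.eventually_analyticAt with ⟨U, hUsub, hUo, hxU⟩
  exact (AnalyticOnNhd.deriv (fun y hy => hUsub hy)) x hxU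

private lemma deriv_congr_punct {f g : ℂ → ℂ} {x : ℂ} (h : f =ᶠ[𝓝[≠] x] g) :
    deriv f =ᶠ[𝓝[≠] x] deriv g := by
  rcases mem_nhdsWithin.mp h with ⟨U, hUo, hxU, hsub⟩
  have hmem : U ∩ {x}ᶜ ∈ 𝓝[≠] x := mem_nhdsWithin.mpr ⟨U, hUo, hxU, Set.Subset.rfl⟩
  filter_upwards [hmem] with z hz
  have hopen : IsOpen (U ∩ {x}ᶜ) := hUo.inter isOpen_compl_singleton
  have hfg : f =ᶠ[𝓝 z] g := Filter.eventually_of_mem (hopen.mem_nhds hz) fun y hy => hsub hy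
  exact hfg.deriv_eq

private lemma key_rep (n : ℕ) (hn : 2 ≤ n) (f : ℂ → ℂ) (z₀ : ℂ) (m' : ℕ)
    (u : ℂ → ℂ) (hu : AnalyticAt ℂ u z₀) (hu0 : u z₀ ≠ 0)
    (hfu : ∀ᶠ z in 𝓝 z₀, deriv f z = (z - z₀) ^ (m' + 1) * u z) :
    ∀ j : ℕ, ∃ v : ℂ → ℂ, AnalyticAt ℂ v z₀ ∧ (∃ r : ℝ, r ≠ 0 ∧ v z₀ = (r : ℂ)) ∧
      ∀ᶠ z in 𝓝[≠] z₀, SRec n f j z = (z - z₀) ^ (-(j : ℤ) - 1) * v z := by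
  have hn0 : (n : ℂ) ≠ 0 := Nat.cast_ne_zero.mpr (by omega)
  have hn0' : (n : ℝ) ≠ 0 := Nat.cast_ne_zero.mpr (by omega)
  have hu' : AnalyticAt ℂ (deriv u) z₀ := analyticAt_deriv' hu
  set w : ℂ → ℂ := fun z => (((m' : ℂ) + 1) * u z + (z - z₀) * deriv u z) / u z with hw
  have hw_an : AnalyticAt ℂ w z₀ := by
    apply AnalyticAt.div _ hu hu0
    exact (analyticAt_const.mul hu).add ((analyticAt_id.sub analyticAt_const).mul hu')
  have hw0 : w z₀ = (m' : ℂ) + 1 := by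
    simp only [hw, sub_self, zero_mul, add_zero]
    rw [mul_div_assoc, div_self hu0, mul_one]
  have hldd : ∀ᶠ z in 𝓝[≠] z₀, ldd f z = (z - z₀) ^ (-1 : ℤ) * w z := by
    have hu_ev : ∀ᶠ z in 𝓝 z₀, AnalyticAt ℂ u z := hu.eventually_analyticAt
    have hEq : deriv f =ᶠ[𝓝 z₀] fun z => (z - z₀) ^ (m' + 1) * u z := hfu
    have hderiv2 : ∀ᶠ z in 𝓝 z₀, deriv (deriv f) z =
        ((m' : ℂ) + 1) * (z - z₀) ^ m' * u z + (z - z₀) ^ (m' + 1) * deriv u z := by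
      filter_upwards [hEq.deriv, hu_ev] with z h1z hz
      rw [h1z]
      have hd1 : HasDerivAt (fun y => (y - z₀) ^ (m' + 1))
          (((m' + 1 : ℕ) : ℂ) * (z - z₀) ^ (m' + 1 - 1) * 1) z :=
        ((hasDerivAt_id z).sub_const z₀).pow (m' + 1)
      have hd2 := hd1.mul hz.differentiableAt.hasDerivAt
      rw [show (fun z => (z - z₀) ^ (m' + 1) * u z) = ((fun y => (y - z₀) ^ (m' + 1)) * u) from rfl,
        hd2.deriv]
      simp only [Nat.add_sub_cancel]
      push_cast
      ring
    have hu_ne : ∀ᶠ z in 𝓝 z₀, u z ≠ 0 := hu.continuousAt.eventually_ne hu0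
    filter_upwards [hfu.filter_mono nhdsWithin_le_nhds, hderiv2.filter_mono nhdsWithin_le_nhds,
      hu_ne.filter_mono nhdsWithin_le_nhds, self_mem_nhdsWithin] with z h1 h2 h3 hz
    have ht : z - z₀ ≠ 0 := sub_ne_zero.mpr hz
    simp only [ldd]
    rw [h1, h2, zpow_neg_one]
    simp only [hw]
    field_simp
    ring
  intro j
  induction j with
  | zero =>
    refine ⟨w, hw_an, ⟨(m' : ℝ) + 1, by positivity, by rw [hw0]; push_cast; ring⟩, ?_⟩
    simpa [SRec] using hldd
  | succ j ih =>
    obtain ⟨v, hv_an, ⟨r, hr, hvr⟩, hv_eq⟩ := ih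
    set N : ℤ := -(j : ℤ) - 1 with hN
    have hv' : AnalyticAt ℂ (deriv v) z₀ := analyticAt_deriv' hv_an
    refine ⟨fun z => (N : ℂ) * v z + (z - z₀) * deriv v z - 1 / (n : ℂ) * w z * v z,
      ?_, ?_, ?_⟩
    · exact ((analyticAt_const.mul hv_an).add
        ((analyticAt_id.sub analyticAt_const).mul hv')).sub
        ((analyticAt_const.mul hw_an).mul hv_an)
    · refine ⟨(-(j : ℝ) - 1 - ((m' : ℝ) + 1) / n) * r, mul_ne_zero ?_ hr, ?_⟩
      · have h1 : (0 : ℝ) < (j : ℝ) + 1 + ((m' : ℝ) + 1) / n := by positivity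
        intro h; rw [show -(j : ℝ) - 1 - ((m' : ℝ) + 1) / n
          = -((j : ℝ) + 1 + ((m' : ℝ) + 1) / n) by ring] at h
        rw [neg_eq_zero] at h; linarith
      · show (N : ℂ) * v z₀ + (z₀ - z₀) * deriv v z₀ - 1 / (n : ℂ) * w z₀ * v z₀ = _
        rw [hvr, hw0, sub_self, zero_mul]
        push_cast [hN]
        ring
    · have hder := deriv_congr_punct hv_eq
      filter_upwards [hder, hv_eq, hldd, self_mem_nhdsWithin,
        hv_an.eventually_analyticAt.filter_mono nhdsWithin_le_nhds] with z hdz hvz hlz hz hvan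
      have ht : z - z₀ ≠ 0 := sub_ne_zero.mpr hz
      have hd1 : HasDerivAt (fun y => (y - z₀) ^ N) ((N : ℂ) * (z - z₀) ^ (N - 1) * 1) z := by
        have h1 := (hasDerivAt_zpow N (z - z₀) (Or.inl ht)).comp z
          ((hasDerivAt_id z).sub_const z₀)
        simpa [Function.comp_def] using h1
      have hd2 : HasDerivAt (fun y => (y - z₀) ^ N * v y)
          ((N : ℂ) * (z - z₀) ^ (N - 1) * 1 * v z + (z - z₀) ^ N * deriv v z) z :=
        hd1.mul hvan.differentiableAt.hasDerivAt
      have hSrec : SRec n f (j + 1) z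
          = deriv (SRec n f j) z - 1 / (n : ℂ) * ldd f z * SRec n f j z := rfl
      rw [hSrec, hdz, hd2.deriv, hvz, hlz,
        show (-((j : ℕ) + 1 : ℕ) - 1 : ℤ) = N - 1 by push_cast [hN]; ring]
      rw [zpow_sub_one₀ ht, zpow_neg_one]
      field_simp

private lemma mero_of_rep (z₀ : ℂ) (F v : ℂ → ℂ) (j : ℕ) (hv : AnalyticAt ℂ v z₀)
    (hv0 : v z₀ ≠ 0)
    (heq : ∀ᶠ z in 𝓝[≠] z₀, F z = (z - z₀) ^ (-(j : ℤ) - 1) * v z) :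
    ∃ h : MeromorphicAt F z₀, meromorphicOrderAt F z₀ = ((-(j : ℤ) - 1 : ℤ) : WithTop ℤ) := by
  have model_mero : MeromorphicAt (fun z => (z - z₀) ^ (-(j : ℤ) - 1) * v z) z₀ := by
    refine ⟨j + 2, ?_⟩
    have hfe : (fun z => (z - z₀) ^ (j + 2) • ((z - z₀) ^ (-(j : ℤ) - 1) * v z))
        = fun z => (z - z₀) * v z := by
      funext z
      rcases eq_or_ne z z₀ with rfl | hz
      · simp
      · have ht : z - z₀ ≠ 0 := sub_ne_zero.mpr hz
        rw [smul_eq_mul, ← mul_assoc, ← zpow_natCast (z - z₀) (j + 2), ← zpow_add₀ ht,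
          show ((j + 2 : ℕ) : ℤ) + (-(j : ℤ) - 1) = 1 by push_cast; ring, zpow_one]
    rw [hfe]
    exact (analyticAt_id.sub analyticAt_const).mul hv
  have hF : MeromorphicAt F z₀ := model_mero.congr (Filter.EventuallyEq.symm heq)
  refine ⟨hF, ?_⟩
  rw [meromorphicOrderAt_eq_int_iff hF]
  exact ⟨v, hv, hv0, by filter_upwards [heq] with z hz; rw [hz, smul_eq_mul]⟩

end AuxPole

/-- If `f` is a non-constant meromorphic function on `𝔻`, `n, k ≥ 2`, and `f'`
vanishes at `z₀ ∈ 𝔻`, then `S_{k,n}(f)` has a pole of order exactly `k - 1` at `z₀`;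
in particular `f''/f' = S_{2,n}(f)` has a simple pole at `z₀`. -/
theorem SGen_pole_of_deriv_zero (n k : ℕ) (hn : 2 ≤ n) (hk : 2 ≤ k) (f : ℂ → ℂ)
    (hf : MeromorphicOn f unitDisk) (hnc : NonConstOn f unitDisk)
    (z₀ : ℂ) (hz₀ : z₀ ∈ unitDisk) (ha : AnalyticAt ℂ f z₀) (hd : deriv f z₀ = 0) :
    (∃ h : MeromorphicAt (SGen n k f) z₀, meromorphicOrderAt (SGen n k f) z₀ = ((1 - (k : ℤ)) : WithTop ℤ)) ∧
    (∃ h : MeromorphicAt (ldd f) z₀, meromorphicOrderAt (ldd f) z₀ = ((-1 : ℤ) : WithTop ℤ)) := by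
  have hd' : AnalyticAt ℂ (deriv f) z₀ := analyticAt_deriv' ha
  have hne : analyticOrderAt (deriv f) z₀ ≠ ⊤ := by
    intro htop
    have h0 : ∀ᶠ z in 𝓝 z₀, deriv f z = 0 := analyticOrderAt_eq_top.mp htop
    have hev : ∀ᶠ w in 𝓝 z₀, AnalyticAt ℂ f w ∧ deriv f w = 0 := ha.eventually_analyticAt.and h0
    rcases Metric.eventually_nhds_iff_ball.mp hev with ⟨ε, hε, hball⟩
    apply hnc
    refine ⟨f z₀, z₀, hz₀, ?_⟩
    have hconst : ∀ wp ∈ Metric.ball z₀ ε, f wp = f z₀ := by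
      intro wp hwp
      refine (convex_ball z₀ ε).is_const_of_fderivWithin_eq_zero
        (fun y hy => ((hball y hy).1.differentiableAt).differentiableWithinAt)
        (fun y hy => ?_) hwp (Metric.mem_ball_self hε)
      rw [fderivWithin_of_isOpen Metric.isOpen_ball hy]
      have h0' : HasDerivAt f 0 y := by
        have hh := (hball y hy).1.differentiableAt.hasDerivAt
        rwa [(hball y hy).2] at hh
      have hF := (hasDerivAt_iff_hasFDerivAt.mp h0').fderiv
      rw [hF]
      ext t
      simp
    exact (Filter.eventually_of_mem (Metric.ball_mem_nhds z₀ hε) hconst).filter_mono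
      nhdsWithin_le_nhds
  obtain ⟨m, hm⟩ := ENat.ne_top_iff_exists.mp hne
  obtain ⟨u, hu_an, hu0, hfu⟩ := (hd'.analyticOrderAt_eq_natCast).mp hm.symm
  simp only [smul_eq_mul] at hfu
  have hm1 : 1 ≤ m := by
    rcases Nat.eq_zero_or_pos m with rfl | h
    · exfalso
      have h1 := hfu.self_of_nhds
      simp only [pow_zero, one_mul] at h1
      rw [hd] at h1
      exact hu0 h1.symm
    · exact h
  obtain ⟨m', rfl⟩ : ∃ m'', m = m'' + 1 := ⟨m - 1, by omega⟩
  have KEY := key_rep n hn f z₀ m' u hu_an hu0 hfu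
  constructor
  · obtain ⟨v, hv_an, ⟨r, hr, hvr⟩, hv_eq⟩ := KEY (k - 2)
    obtain ⟨hmero, hord⟩ := mero_of_rep z₀ (SRec n f (k - 2)) v (k - 2) hv_an
      (by rw [hvr]; exact_mod_cast hr) hv_eq
    have hz : (-((k - 2 : ℕ) : ℤ) - 1) = 1 - (k : ℤ) := by omega
    exact ⟨hmero, hord.trans (by rw [hz]; norm_cast)⟩
  · obtain ⟨v, hv_an, ⟨r, hr, hvr⟩, hv_eq⟩ := KEY 0
    obtain ⟨hmero, hord⟩ := mero_of_rep z₀ (SRec n f 0) v 0 hv_an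
      (by rw [hvr]; exact_mod_cast hr) hv_eq
    exact ⟨hmero, hord.trans (by norm_num)⟩
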